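/- Let G be a finite undirected weighted graph with nonnegative weights, s a vertex, and v₁,...,v_ℓ distinct vertices different from s. Suppose for each i ∈ [ℓ] a cut S_i with v_i ∈ S_i ⊆ V−{s} is given satisfying cost(S_i) ≤ f({s,v₁,...,v_{i−1}}, v_i), and define λ(v) = min{cost(S_i) : i ∈ [ℓ], v ∈ S_i} for v covered by some S_i. Then for every k ∈ [ℓ]: (i) λ(v_k) ≥ f(s, v_k); and (ii) if the minimal minimum s-v_k cut C_{s v_k} satisfies {v₁,...,v_{k−1}} ∩ C_{s v_k} = ∅, then cost(S_k) = f(s, v_k), hence λ(v_k) = f(s, v_k). -/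

import Mathlib

open Finset

variable {V : Type*} [Fintype V] [DecidableEq V]

noncomputable section

/-- Cost of the cut `U`: total weight of edges crossing between `U` and its complement. -/
def cutCost (w : V → V → ℝ) (U : Finset V) : ℝ :=
  ∑ u ∈ U, ∑ v ∈ Uᶜ, w u v

/-- `U` is an `S`-`T` cut: `T ⊆ U ⊆ V − S`. -/
def IsCut (S T U : Finset V) : Prop := T ⊆ U ∧ Disjoint U S

/-- Minimum cost of an `S`-`T` cut. -/
def minCutCost (w : V → V → ℝ) (S T : Finset V) : ℝ :=
  sInf (cutCost w '' {U : Finset V | IsCut S T U})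

/-- `U` is a minimum `S`-`T` cut. -/
def IsMinCut (w : V → V → ℝ) (S T U : Finset V) : Prop :=
  IsCut S T U ∧ cutCost w U = minCutCost w S T

lemma cutCost_nonneg {w : V → V → ℝ} (hw : ∀ u v, 0 ≤ w u v) (U : Finset V) :
    0 ≤ cutCost w U :=
  sum_nonneg fun u _ => sum_nonneg fun x _ => hw u x

-- `minCutCost` is a real `sInf`, which is a lower bound only for a set bounded below.
lemma minCutCost_le_cutCost {w : V → V → ℝ} (hw : ∀ u v, 0 ≤ w u v) {S T U : Finset V}
    (hU : IsCut S T U) : minCutCost w S T ≤ cutCost w U :=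
  csInf_le ⟨0, by rintro _ ⟨U', -, rfl⟩; exact cutCost_nonneg hw U'⟩ ⟨U, hU, rfl⟩

lemma cutCost_eq_minCutCost_of_le {w : V → V → ℝ} (hw : ∀ u v, 0 ≤ w u v)
    {S S' T U C : Finset V} (hC : IsMinCut w S T C) (hC' : IsCut S' T C) (hU : IsCut S T U)
    (hUcost : cutCost w U ≤ minCutCost w S' T) : cutCost w U = minCutCost w S T :=
  le_antisymm
    (calc cutCost w U ≤ minCutCost w S' T := hUcost
      _ ≤ cutCost w C := minCutCost_le_cutCost hw hC'
      _ = minCutCost w S T := hC.2)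
    (minCutCost_le_cutCost hw hU)

theorem orderedCuts_properties_general (w : V → V → ℝ) (hw : ∀ u v, 0 ≤ w u v)
    (s : V) (ℓ : ℕ) (v : ℕ → V)
    (S : ℕ → Finset V)
    (hScut : ∀ i, 1 ≤ i → i ≤ ℓ → IsCut {s} {v i} (S i))
    (hScost : ∀ i, 1 ≤ i → i ≤ ℓ →
      cutCost w (S i) ≤
        minCutCost w (insert s ((Finset.Icc 1 (i - 1)).image v)) {v i})
    (k : ℕ) (hk1 : 1 ≤ k) (hkℓ : k ≤ ℓ) :
    (∀ i, 1 ≤ i → i ≤ ℓ → v k ∈ S i →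
        minCutCost w {s} {v k} ≤ cutCost w (S i)) ∧
    (∀ C : Finset V, IsMinCut w {s} {v k} C →
        (∀ U, IsMinCut w {s} {v k} U → U ⊆ C → U = C) →
        (∀ j, 1 ≤ j → j < k → v j ∉ C) →
        cutCost w (S k) = minCutCost w {s} {v k}) := by
  constructor
  · intro i hi1 hiℓ hvk
    exact minCutCost_le_cutCost hw ⟨singleton_subset_iff.mpr hvk, (hScut i hi1 hiℓ).2⟩
  intro C hC _ havoid
  have hCavoid : Disjoint C ((Icc 1 (k - 1)).image v) := by
    refine disjoint_left.mpr fun x hxC hx => ?_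
    obtain ⟨j, hj, rfl⟩ := mem_image.mp hx
    obtain ⟨hj1, hjk⟩ := mem_Icc.mp hj
    exact havoid j hj1 (by omega) hxC
  have hC' : IsCut (insert s ((Icc 1 (k - 1)).image v)) {v k} C :=
    insert_eq s _ ▸ ⟨hC.1.1, disjoint_union_right.mpr ⟨hC.1.2, hCavoid⟩⟩
  exact cutCost_eq_minCutCost_of_le hw hC hC' (hScut k hk1 hkℓ) (hScost k hk1 hkℓ)

/-- Properties of the cuts produced by `OrderedCuts`: (i) every `S_i` containing `v_k` has
cost at least `f(s, v_k)`; (ii) if the minimal minimum `s`-`v_k` cut avoids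
`{v_1, ..., v_{k-1}}`, then `cost(S_k) = f(s, v_k)`. -/
theorem orderedCuts_properties (w : V → V → ℝ) (hw : ∀ u v, 0 ≤ w u v)
    (hsym : ∀ u v, w u v = w v u)
    (s : V) (ℓ : ℕ) (v : ℕ → V)
    (hvs : ∀ i, 1 ≤ i → i ≤ ℓ → v i ≠ s)
    (hinj : ∀ i j, 1 ≤ i → i ≤ ℓ → 1 ≤ j → j ≤ ℓ → v i = v j → i = j)
    (S : ℕ → Finset V)
    (hScut : ∀ i, 1 ≤ i → i ≤ ℓ → IsCut {s} {v i} (S i))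
    (hScost : ∀ i, 1 ≤ i → i ≤ ℓ →
      cutCost w (S i) ≤
        minCutCost w (insert s ((Finset.Icc 1 (i - 1)).image v)) {v i})
    (k : ℕ) (hk1 : 1 ≤ k) (hkℓ : k ≤ ℓ) :
    (∀ i, 1 ≤ i → i ≤ ℓ → v k ∈ S i →
        minCutCost w {s} {v k} ≤ cutCost w (S i)) ∧
    (∀ C : Finset V, IsMinCut w {s} {v k} C →
        (∀ U, IsMinCut w {s} {v k} U → U ⊆ C → U = C) →
        (∀ j, 1 ≤ j → j < k → v j ∉ C) →
        cutCost w (S k) = minCutCost w {s} {v k}) :=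
  orderedCuts_properties_general w hw s ℓ v S hScut hScost k hk1 hkℓ
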